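/- arXiv:2210.11184 — 3 statements merged into one kernel-verified Lean document; each statement's English description precedes it below -/
import Mathlib

section
/- Let C be a completely regular code with covering radius 2 in J(n,4) whose intersection matrix M (with rows summing to 4n−16 and parameters β₀, γ₁, β₁, γ₂) has eigenvalues θ₀(n,4) = 4(n−4), θ₂(n,4) = 2(n−6)−2, θ₃(n,4) = (n−7)−3. If β₀ ≠ γ₂, then γ₁ = −(β₀−2n+2)(β₀−3n+6)/(β₀−γ₂) and β₁ = (γ₂−2n+2)(γ₂−3n+6)/(β₀−γ₂). -/
/-!
Every row of the intersection matrix sums to `k = 4n - 16`, so `k` is an eigenvalue and the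
characteristic polynomial is `(x - k)` times a monic quadratic in `x - k` with coefficients
`β₀ + γ₁ + β₁ + γ₂` and `β₀β₁ + β₀γ₂ + γ₁γ₂`. The other two eigenvalues are `k - (2n - 2)` and
`k - (3n - 6)`, so Vieta's formulas give two equations which are linear in `γ₁, β₁`, with
determinant `β₀ - γ₂`.
-/

open Polynomial

variable {R : Type*} [CommRing R]

def intersectionMatrix (k β₀ β₁ γ₁ γ₂ : R) : Matrix (Fin 3) (Fin 3) R :=
  !![k - β₀, β₀, 0;
     γ₁, k - γ₁ - β₁, β₁;
     0, γ₂, k - γ₂]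

theorem charpoly_intersectionMatrix (k β₀ β₁ γ₁ γ₂ : R) :
    (intersectionMatrix k β₀ β₁ γ₁ γ₂).charpoly =
      (X - C k) * ((X - C k) ^ 2 + C (β₀ + γ₁ + β₁ + γ₂) * (X - C k) +
        C (β₀ * β₁ + β₀ * γ₂ + γ₁ * γ₂)) := by
  simp [Matrix.charpoly, Matrix.det_fin_three, intersectionMatrix]
  ring

section Field

variable {K : Type*} [Field K]

theorem eq_add_and_eq_mul_of_mul_X_sub_C_eq {k s p a b : K}
    (h : (X - C k) * ((X - C k) ^ 2 + C s * (X - C k) + C p) =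
      (X - C k) * ((X - C k + C a) * (X - C k + C b))) :
    s = a + b ∧ p = a * b := by
  have hq := mul_left_cancel₀ (X_sub_C_ne_zero k) h
  have h0 := congrArg (eval k) hq
  have h1 := congrArg (eval (k + 1)) hq
  simp only [eval_add, eval_mul, eval_pow, eval_sub, eval_X, eval_C] at h0 h1
  exact ⟨by linear_combination h1 - h0, by linear_combination h0⟩

theorem solve_intersection_numbers {β₀ β₁ γ₁ γ₂ a b : K}
    (hsum : β₀ + γ₁ + β₁ + γ₂ = a + b) (hprod : β₀ * β₁ + β₀ * γ₂ + γ₁ * γ₂ = a * b)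
    (hne : β₀ ≠ γ₂) :
    γ₁ = -((β₀ - a) * (β₀ - b)) / (β₀ - γ₂) ∧ β₁ = ((γ₂ - a) * (γ₂ - b)) / (β₀ - γ₂) := by
  have hsub : β₀ - γ₂ ≠ 0 := sub_ne_zero.mpr hne
  constructor <;> rw [eq_div_iff hsub]
  · linear_combination β₀ * hsum - hprod
  · linear_combination hprod - γ₂ * hsum

end Field

open Polynomial in
/-- solving the polynomial identities from the characteristic polynomial of
the intersection matrix of a completely regular code with covering radius 2 in `J(n,4)`
whose eigenvalues are `θ₀(n,4), θ₂(n,4), θ₃(n,4)`, in the case `β₀ ≠ γ₂`. -/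
theorem stmt3 (n : ℕ) (β₀ β₁ γ₁ γ₂ : ℚ)
    (M : Matrix (Fin 3) (Fin 3) ℚ)
    (hM : M = !![4 * (n : ℚ) - 16 - β₀, β₀, 0;
                 γ₁, 4 * (n : ℚ) - 16 - γ₁ - β₁, β₁;
                 0, γ₂, 4 * (n : ℚ) - 16 - γ₂])
    (hchar : M.charpoly =
      (X - C (4 * ((n : ℚ) - 4))) * (X - C (2 * ((n : ℚ) - 6) - 2)) *
        (X - C (((n : ℚ) - 7) - 3)))
    (hne : β₀ ≠ γ₂) :
    γ₁ = -((β₀ - 2 * (n : ℚ) + 2) * (β₀ - 3 * (n : ℚ) + 6)) / (β₀ - γ₂) ∧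
    β₁ = ((γ₂ - 2 * (n : ℚ) + 2) * (γ₂ - 3 * (n : ℚ) + 6)) / (β₀ - γ₂) := by
  set k : ℚ := 4 * n - 16
  set a : ℚ := 2 * n - 2
  set b : ℚ := 3 * n - 6
  have hfactor : M.charpoly = (X - C k) * ((X - C k + C a) * (X - C k + C b)) := by
    rw [hchar]
    simp only [k, a, b, map_sub, map_mul, map_natCast, map_ofNat]
    ring
  have hM' : M = intersectionMatrix k β₀ β₁ γ₁ γ₂ := hM
  rw [hM', charpoly_intersectionMatrix] at hfactor
  obtain ⟨hsum, hprod⟩ := eq_add_and_eq_mul_of_mul_X_sub_C_eq hfactor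
  convert solve_intersection_numbers hsum hprod hne using 3 <;> ring
end

section
/- Let p ≥ 3, q ≥ 3 and let Y₁,…,Y_q partition {1,…,n} (n = pq) with |Yᵢ| = p. Let D = {x : |x|=4, ∃i, x ⊆ Yᵢ} in J(n,4). Then D is not completely regular: there exist two vertices at distance 2 from D having different numbers of neighbors at distance 1 from D. Specifically, if {1,2} ⊆ Y₁, {3,4} ⊆ Y₂, 5 ∈ Y₃, then {1,2,3,4} has 4(p−2) neighbors in D₁ while {1,2,3,5} has 2(p−2) neighbors in D₁, where D₁ = {x : |x|=4, ∃i, |x ∩ Yᵢ| = 3}. -/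
/-!
A neighbour of a 4-set `x` in `J(n,4)` is `insert f (x.erase z)` with `z ∈ x` and `f ∉ x`, and
it lies in `D₁` iff some block contains three of its points. If `x` meets a block `Y j` in two
points and every other block in fewer, this happens iff `z ∉ Y j` and `f ∈ Y j \ x`, which
leaves `p - 2` choices of `f`. For `{a, b, c, d}` every `z` leaves a pair in the other block, giving
`4 (p - 2)`; for `{a, b, c, e}` only `z ∈ {c, e}` does, giving `2 (p - 2)`.
-/

open Finset Function

variable {α ι : Type*} [DecidableEq α]

theorem card_filter_card_inter_eq_sum [Fintype α] (P : Finset α → Prop) [DecidablePred P]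
    {x : Finset α} {k : ℕ} (hx : #x = k + 1) :
    #(({y | #y = k + 1 ∧ P y} : Finset (Finset α)).filter fun y => #(x ∩ y) = k)
      = ∑ z ∈ x, #{f ∈ xᶜ | P (insert f (x.erase z))} := by
  rw [← card_sigma]
  symm
  refine card_bij (fun p _ => insert p.2 (x.erase p.1)) ?_ ?_ ?_
  · rintro ⟨z, f⟩ h
    simp only [mem_sigma, mem_filter, mem_compl, mem_univ, true_and] at h ⊢
    obtain ⟨hz, hf, hP⟩ := h
    refine ⟨⟨?_, hP⟩, ?_⟩
    · rw [card_insert_of_notMem fun h => hf (mem_of_mem_erase h), card_erase_of_mem hz, hx]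
      rfl
    · rw [inter_insert_of_notMem hf, inter_eq_right.mpr (erase_subset z x),
        card_erase_of_mem hz, hx]
      rfl
  · rintro ⟨z, f⟩ h ⟨z', f'⟩ h' heq
    simp only [mem_sigma, mem_filter, mem_compl] at h h' heq
    have hz := congrArg (z ∈ ·) heq
    have hf := congrArg (f ∈ ·) heq
    simp only [mem_insert, mem_erase, eq_iff_iff] at hz hf
    obtain rfl : z = z' := by grind
    obtain rfl : f = f' := by grind
    rfl
  · intro y hy
    simp only [mem_filter, mem_univ, true_and] at hy
    obtain ⟨⟨hy, hP⟩, hxy⟩ := hy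
    obtain ⟨z, hz⟩ : ∃ z, x \ y = {z} :=
      card_eq_one.mp (by rw [card_sdiff, inter_comm, hxy, hx]; simp)
    obtain ⟨f, hf⟩ : ∃ f, y \ x = {f} := card_eq_one.mp (by rw [card_sdiff, hxy, hy]; simp)
    have hzx : z ∈ x := (mem_sdiff.mp (hz ▸ mem_singleton_self z)).1
    have hfx : f ∉ x := (mem_sdiff.mp (hf ▸ mem_singleton_self f)).2
    have hyzf : insert f (x.erase z) = y := by
      ext v
      have hvz := congrArg (v ∈ ·) hz
      have hvf := congrArg (v ∈ ·) hf
      simp only [mem_sdiff, mem_singleton, eq_iff_iff] at hvz hvf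
      simp only [mem_insert, mem_erase]
      grind
    exact ⟨⟨z, f⟩, by simp [hzx, hfx, hyzf, hP], hyzf⟩

section Blocks

variable {Y : ι → Finset α} {T x : Finset α} {f : α} {j : ι} {m : ℕ}

theorem card_insert_inter_le (f : α) (T s : Finset α) :
    #(insert f T ∩ s) ≤ #(T ∩ s) + 1 := by
  by_cases hf : f ∈ s
  · rw [insert_inter_of_mem hf]
    exact card_insert_le _ _
  · rw [insert_inter_of_notMem hf]
    omega

theorem not_exists_card_insert_inter_eq_succ (h : ∀ i, #(T ∩ Y i) < m) :
    ¬ ∃ i, #(insert f T ∩ Y i) = m + 1 := by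
  rintro ⟨i, hi⟩
  have := card_insert_inter_le f T (Y i)
  have := h i
  omega

theorem card_inter_le_card_sdiff_of_ne (hY : Pairwise (Disjoint on Y)) {i : ι} (hij : i ≠ j) :
    #(T ∩ Y i) ≤ #(T \ Y j) :=
  card_le_card fun _ hv =>
    mem_sdiff.mpr ⟨(mem_inter.mp hv).1, disjoint_left.mp (hY hij) (mem_inter.mp hv).2⟩

theorem exists_card_insert_inter_eq_succ_iff (hY : Pairwise (Disjoint on Y)) (hf : f ∉ T)
    (hj : #(T ∩ Y j) = m) (hT : #T < 2 * m) :
    (∃ i, #(insert f T ∩ Y i) = m + 1) ↔ f ∈ Y j := by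
  refine ⟨fun ⟨i, hi⟩ => ?_, fun hfj => ⟨j, ?_⟩⟩
  · by_cases hij : i = j
    · subst hij
      by_contra hfj
      rw [insert_inter_of_notMem hfj] at hi
      omega
    · have := card_insert_inter_le f T (Y i)
      have := card_inter_le_card_sdiff_of_ne (T := T) hY hij
      rw [card_sdiff, inter_comm (Y j), hj] at this
      omega
  · rw [insert_inter_of_mem hfj, card_insert_of_notMem fun h => hf (mem_inter.mp h).1, hj]

theorem card_filter_exists_card_insert_inter_eq_succ [Fintype α] [Fintype ι]
    (hY : Pairwise (Disjoint on Y))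
    (hTx : T ⊆ x) (hj : #(T ∩ Y j) = m) (hT : #T < 2 * m) :
    #{f ∈ xᶜ | ∃ i, #(insert f T ∩ Y i) = m + 1} = #(Y j \ x) := by
  rw [filter_congr fun f hf =>
      exists_card_insert_inter_eq_succ_iff hY (fun h => mem_compl.mp hf (hTx h)) hj hT,
    filter_mem_eq_inter, sdiff_eq_inter_compl, inter_comm]

theorem card_filter_exists_card_insert_erase_inter_eq_succ [Fintype α] [Fintype ι]
    (hY : Pairwise (Disjoint on Y)) {z : α} (hz : z ∈ x) (hzj : z ∉ Y j)
    (hj : #(x ∩ Y j) = m) (hx : #x ≤ 2 * m) :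
    #{f ∈ xᶜ | ∃ i, #(insert f (x.erase z) ∩ Y i) = m + 1} = #(Y j \ x) := by
  have := card_pos.mpr ⟨z, hz⟩
  refine card_filter_exists_card_insert_inter_eq_succ hY (erase_subset z x) ?_ ?_
  · rw [erase_inter, erase_eq_of_notMem fun h => hzj (mem_inter.mp h).2, hj]
  · rw [card_erase_of_mem hz]
    omega

theorem card_filter_exists_card_insert_erase_inter_eq_succ_eq_zero [Fintype α] [Fintype ι]
    {z : α} (hz : z ∈ x) (hzj : z ∈ Y j) (hj : #(x ∩ Y j) = m)
    (hi : ∀ i ≠ j, #(x ∩ Y i) < m) :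
    #{f ∈ xᶜ | ∃ i, #(insert f (x.erase z) ∩ Y i) = m + 1} = 0 := by
  refine card_eq_zero.mpr (filter_false_of_mem fun f _ => not_exists_card_insert_inter_eq_succ
    fun i => ?_)
  rw [erase_inter]
  by_cases hij : i = j
  · subst hij
    have := card_pos.mpr ⟨z, mem_inter.mpr ⟨hz, hzj⟩⟩
    rw [card_erase_of_mem (mem_inter.mpr ⟨hz, hzj⟩)]
    omega
  · exact (card_le_card (erase_subset z _)).trans_lt (hi i hij)

theorem card_pair_inter_le_one (hY : Pairwise (Disjoint on Y)) {u v : α} {k : ι}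
    (hu : u ∈ Y j) (hv : v ∈ Y k) (hjk : j ≠ k) (i : ι) : #({u, v} ∩ Y i) ≤ 1 := by
  have block_eq {z : α} {i i' : ι} (h : z ∈ Y i) (h' : z ∈ Y i') : i = i' :=
    hY.eq (not_disjoint_iff.mpr ⟨z, h, h'⟩)
  rw [card_le_one_iff]
  intro s t hs ht
  simp only [mem_inter, mem_insert, mem_singleton] at hs ht
  grind

end Blocks

section Partition

variable [Fintype α] [Fintype ι] {Y : ι → Finset α} {x : Finset α} {j : ι} {m p K : ℕ}

theorem card_neighbors_of_subset_union (hY : Pairwise (Disjoint on Y))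
    (hcard : ∀ i, #(Y i) = p) {k : ι} (hjk : j ≠ k) (hxjk : x ⊆ Y j ∪ Y k)
    (hj : #(x ∩ Y j) = m) (hk : #(x ∩ Y k) = m)
    (hx : #x = K + 1) :
    #(({y | #y = K + 1 ∧ ∃ i, #(y ∩ Y i) = m + 1} : Finset (Finset α)).filter
      fun y => #(x ∩ y) = K) = (K + 1) * (p - m) := by
  have hx2m : #x ≤ 2 * m := calc
    #x ≤ #(x ∩ Y j ∪ x ∩ Y k) := card_le_card fun v hv => by grind
    _ ≤ 2 * m := (card_union_le _ _).trans (by omega)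
  rw [card_filter_card_inter_eq_sum _ hx, ← hx]
  refine sum_const_nat fun z hz => ?_
  rcases mem_union.mp (hxjk hz) with hzj | hzk
  · rw [card_filter_exists_card_insert_erase_inter_eq_succ hY hz
      (disjoint_left.mp (hY hjk) hzj) hk hx2m, card_sdiff, hcard, hk]
  · rw [card_filter_exists_card_insert_erase_inter_eq_succ hY hz
      (disjoint_right.mp (hY hjk) hzk) hj hx2m, card_sdiff, hcard, hj]

theorem card_neighbors_of_lt_card_inter (hY : Pairwise (Disjoint on Y))
    (hcard : ∀ i, #(Y i) = p) (hj : #(x ∩ Y j) = m) (hi : ∀ i ≠ j, #(x ∩ Y i) < m)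
    (hx : #x = K + 1) (hKm : K + 1 ≤ 2 * m) :
    #(({y | #y = K + 1 ∧ ∃ i, #(y ∩ Y i) = m + 1} : Finset (Finset α)).filter
      fun y => #(x ∩ y) = K) = (K + 1 - m) * (p - m) := by
  rw [card_filter_card_inter_eq_sum _ hx, ← sum_inter_add_sum_sdiff x (Y j),
    sum_eq_zero fun z hz => card_filter_exists_card_insert_erase_inter_eq_succ_eq_zero
      (mem_inter.mp hz).1 (mem_inter.mp hz).2 hj hi,
    sum_const_nat fun z hz => by
      rw [card_filter_exists_card_insert_erase_inter_eq_succ hY (mem_sdiff.mp hz).1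
        (mem_sdiff.mp hz).2 hj (hx ▸ hKm), card_sdiff, hcard, hj],
    card_sdiff, inter_comm, hj, hx, zero_add]

theorem card_neighbors_of_two_pairs (hY : Pairwise (Disjoint on Y)) (hcard : ∀ i, #(Y i) = p)
    {k : ι} (hjk : j ≠ k) {a b c d : α} (hab : a ≠ b) (hcd : c ≠ d)
    (ha : a ∈ Y j) (hb : b ∈ Y j) (hc : c ∈ Y k) (hd : d ∈ Y k) :
    #(({y | #y = 4 ∧ ∃ i, #(y ∩ Y i) = 3} : Finset (Finset α)).filter
      fun y => #({a, b, c, d} ∩ y) = 3) = 4 * (p - 2) := by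
  have hak := disjoint_left.mp (hY hjk) ha
  have hbk := disjoint_left.mp (hY hjk) hb
  have hcj := disjoint_right.mp (hY hjk) hc
  have hdj := disjoint_right.mp (hY hjk) hd
  have key := card_neighbors_of_subset_union (x := {a, b, c, d}) (K := 3) (m := 2)
    hY hcard hjk
    (by simp [insert_subset_iff, ha, hb, hc, hd])
    (by rw [insert_inter_of_mem ha, insert_inter_of_mem hb, insert_inter_of_notMem hcj,
      singleton_inter_of_notMem hdj, insert_empty, card_pair hab])
    (by rw [insert_inter_of_notMem hak, insert_inter_of_notMem hbk, insert_inter_of_mem hc,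
      singleton_inter_of_mem hd, card_pair hcd])
    (by simp [hab, hcd, ne_of_mem_of_not_mem ha hcj, ne_of_mem_of_not_mem ha hdj,
      ne_of_mem_of_not_mem hb hcj, ne_of_mem_of_not_mem hb hdj])
  simpa only [Nat.reduceAdd] using key

theorem card_neighbors_of_pair_and_two_singletons (hY : Pairwise (Disjoint on Y))
    (hcard : ∀ i, #(Y i) = p) {k l : ι} (hjk : j ≠ k) (hjl : j ≠ l) (hkl : k ≠ l)
    {a b c e : α} (hab : a ≠ b)
    (ha : a ∈ Y j) (hb : b ∈ Y j) (hc : c ∈ Y k) (he : e ∈ Y l) :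
    #(({y | #y = 4 ∧ ∃ i, #(y ∩ Y i) = 3} : Finset (Finset α)).filter
      fun y => #({a, b, c, e} ∩ y) = 3) = 2 * (p - 2) := by
  have hcj := disjoint_right.mp (hY hjk) hc
  have hej := disjoint_right.mp (hY hjl) he
  have hce := ne_of_mem_of_not_mem hc (disjoint_right.mp (hY hkl) he)
  have key := card_neighbors_of_lt_card_inter (x := {a, b, c, e}) (K := 3) (m := 2) hY hcard
    (by rw [insert_inter_of_mem ha, insert_inter_of_mem hb, insert_inter_of_notMem hcj,
      singleton_inter_of_notMem hej, insert_empty, card_pair hab])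
    (fun i hi => by
      rw [insert_inter_of_notMem (disjoint_left.mp (hY hi.symm) ha),
        insert_inter_of_notMem (disjoint_left.mp (hY hi.symm) hb)]
      exact Nat.lt_succ_of_le (card_pair_inter_le_one hY hc he hkl i))
    (by simp [hab, hce, ne_of_mem_of_not_mem ha hcj, ne_of_mem_of_not_mem ha hej,
      ne_of_mem_of_not_mem hb hcj, ne_of_mem_of_not_mem hb hej])
    le_rfl
  simpa only [Nat.reduceAdd, Nat.reduceSub] using key

end Partition

theorem stmt8_general (n p q : ℕ) (hp : 3 ≤ p)
    (Y : Fin q → Finset (Fin n))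
    (hcard : ∀ i, (Y i).card = p)
    (hdisj : ∀ i j, i ≠ j → Disjoint (Y i) (Y j))
    (i₁ i₂ i₃ : Fin q) (h12 : i₁ ≠ i₂) (h13 : i₁ ≠ i₃) (h23 : i₂ ≠ i₃)
    (a b c d e : Fin n) (hab : a ≠ b) (hcd : c ≠ d)
    (ha : a ∈ Y i₁) (hb : b ∈ Y i₁) (hc : c ∈ Y i₂) (hd : d ∈ Y i₂) (he : e ∈ Y i₃) :
    ∀ D₁ : Finset (Finset (Fin n)),
      D₁ = Finset.univ.filter (fun x => x.card = 4 ∧ ∃ i, (x ∩ Y i).card = 3) →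
      (D₁.filter (fun y => (({a, b, c, d} : Finset (Fin n)) ∩ y).card = 3)).card
          = 4 * (p - 2) ∧
      (D₁.filter (fun y => (({a, b, c, e} : Finset (Fin n)) ∩ y).card = 3)).card
          = 2 * (p - 2) ∧
      4 * (p - 2) ≠ 2 * (p - 2) := by
  rintro D₁ rfl
  have hY : Pairwise (Disjoint on Y) := fun i j h => hdisj i j h
  have h1 := card_neighbors_of_two_pairs hY hcard h12 hab hcd ha hb hc hd
  have h2 := card_neighbors_of_pair_and_two_singletons hY hcard h12 h13 h23 hab ha hb hc he
  -- `convert` bridges the two decidability instances of `∃ i : Fin q, _`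
  exact ⟨by convert h1, by convert h2, by omega⟩

/-- the code of 4-subsets of the blocks of a partition into `q ≥ 3` blocks
of size `p ≥ 3` is not completely regular in `J(n,4)`: the two explicit vertices at
distance 2 from the code have `4(p-2)` resp. `2(p-2)` neighbors at distance 1. -/
theorem stmt8 (n p q : ℕ) (hp : 3 ≤ p) (hq : 3 ≤ q)
    (Y : Fin q → Finset (Fin n))
    (hcard : ∀ i, (Y i).card = p)
    (hdisj : ∀ i j, i ≠ j → Disjoint (Y i) (Y j))
    (hunion : ∀ v : Fin n, ∃ i, v ∈ Y i)
    (i₁ i₂ i₃ : Fin q) (h12 : i₁ ≠ i₂) (h13 : i₁ ≠ i₃) (h23 : i₂ ≠ i₃)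
    (a b c d e : Fin n) (hab : a ≠ b) (hcd : c ≠ d)
    (ha : a ∈ Y i₁) (hb : b ∈ Y i₁) (hc : c ∈ Y i₂) (hd : d ∈ Y i₂) (he : e ∈ Y i₃) :
    ∀ D₁ : Finset (Finset (Fin n)),
      D₁ = Finset.univ.filter (fun x => x.card = 4 ∧ ∃ i, (x ∩ Y i).card = 3) →
      (D₁.filter (fun y => (({a, b, c, d} : Finset (Fin n)) ∩ y).card = 3)).card
          = 4 * (p - 2) ∧
      (D₁.filter (fun y => (({a, b, c, e} : Finset (Fin n)) ∩ y).card = 3)).card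
          = 2 * (p - 2) ∧
      4 * (p - 2) ≠ 2 * (p - 2) :=
  stmt8_general n p q hp Y hcard hdisj i₁ i₂ i₃ h12 h13 h23 a b c d e hab hcd ha hb hc hd he
end

section
/- Let n ≥ 8, and let Y₁, Y₂ be two distinct subsets of {1,…,n} with |Y₁| = |Y₂| = m ≥ 4 and 1 ≤ |Y₁ ∩ Y₂| < m. Let C' be the set of all 2-subsets contained in Y₁ or in Y₂. Then there exists a vertex of C' with strictly more than 2(m−2) neighbors in C' in J(n,2). -/
/-- if `C'` is the set of 2-subsets contained in one of two distinct
intersecting `m`-subsets `Y₁, Y₂`, then some vertex of `C'` has strictly more than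
`2(m-2)` neighbors in `C'` in `J(n,2)`. -/
theorem stmt17 (n m : ℕ) (hn : 8 ≤ n) (hm : 4 ≤ m)
    (Y₁ Y₂ : Finset (Fin n)) (hne : Y₁ ≠ Y₂)
    (hc1 : Y₁.card = m) (hc2 : Y₂.card = m)
    (hint1 : 1 ≤ (Y₁ ∩ Y₂).card) (hint2 : (Y₁ ∩ Y₂).card < m) :
    ∀ C' : Finset (Finset (Fin n)),
      C' = Finset.univ.filter (fun x => x.card = 2 ∧ (x ⊆ Y₁ ∨ x ⊆ Y₂)) →
      ∃ x ∈ C', 2 * (m - 2) < (C'.filter (fun y => (x ∩ y).card = 1)).card := by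
  intro C' hC'
  -- pick j ∈ Y₁ \ Y₂
  have hsd : (Y₁ \ Y₂).Nonempty := by
    rw [← Finset.card_pos]
    have := Finset.card_inter_add_card_sdiff Y₁ Y₂
    omega
  obtain ⟨j, hj⟩ := hsd
  have hjY₁ : j ∈ Y₁ := (Finset.mem_sdiff.mp hj).1
  have hjY₂ : j ∉ Y₂ := (Finset.mem_sdiff.mp hj).2
  -- pick l ∈ Y₁ ∩ Y₂
  have hil : (Y₁ ∩ Y₂).Nonempty := Finset.card_pos.mp hint1
  obtain ⟨l, hl⟩ := hil
  have hlY₁ : l ∈ Y₁ := (Finset.mem_inter.mp hl).1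
  have hlY₂ : l ∈ Y₂ := (Finset.mem_inter.mp hl).2
  have hjl : j ≠ l := fun h => hjY₂ (h ▸ hlY₂)
  set x : Finset (Fin n) := {j, l} with hx
  have hxcard : x.card = 2 := by
    rw [hx, Finset.card_insert_of_notMem (by simp [hjl]), Finset.card_singleton]
  have hxsub : x ⊆ Y₁ := by
    intro t ht
    rcases Finset.mem_insert.mp ht with h | h
    · exact h ▸ hjY₁
    · exact (Finset.mem_singleton.mp h) ▸ hlY₁
  have hxC : x ∈ C' := by
    rw [hC', Finset.mem_filter]
    exact ⟨Finset.mem_univ _, hxcard, Or.inl hxsub⟩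
  refine ⟨x, hxC, ?_⟩
  -- the witness set of neighbors
  set S : Finset (Finset (Fin n)) :=
    ((Y₁ \ {j, l}).image fun a => {j, a}) ∪ (((Y₁ ∪ Y₂) \ {j, l}).image fun b => {l, b})
    with hS
  have hSsub : S ⊆ C'.filter (fun y => (x ∩ y).card = 1) := by
    intro y hy
    rw [hS, Finset.mem_union] at hy
    rw [Finset.mem_filter, hC', Finset.mem_filter]
    rcases hy with hy | hy
    · obtain ⟨a, ha, rfl⟩ := Finset.mem_image.mp hy
      obtain ⟨haY, ha2⟩ := Finset.mem_sdiff.mp ha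
      have haj : a ≠ j := fun h => ha2 (by simp [h])
      have hal : a ≠ l := fun h => ha2 (by simp [h])
      refine ⟨⟨Finset.mem_univ _, ?_, Or.inl ?_⟩, ?_⟩
      · rw [Finset.card_insert_of_notMem (by simp [haj.symm]), Finset.card_singleton]
      · intro t ht
        rcases Finset.mem_insert.mp ht with h | h
        · exact h ▸ hjY₁
        · exact (Finset.mem_singleton.mp h) ▸ haY
      · have : x ∩ ({j, a} : Finset (Fin n)) = {j} := by
          ext t
          simp only [hx, Finset.mem_inter, Finset.mem_insert, Finset.mem_singleton]
          constructor
          · rintro ⟨h1 | h1, h2 | h2⟩ <;> simp_all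
          · rintro rfl; exact ⟨Or.inl rfl, Or.inl rfl⟩
        rw [this, Finset.card_singleton]
    · obtain ⟨b, hb, rfl⟩ := Finset.mem_image.mp hy
      obtain ⟨hbY, hb2⟩ := Finset.mem_sdiff.mp hb
      have hbj : b ≠ j := fun h => hb2 (by simp [h])
      have hbl : b ≠ l := fun h => hb2 (by simp [h])
      refine ⟨⟨Finset.mem_univ _, ?_, ?_⟩, ?_⟩
      · rw [Finset.card_insert_of_notMem (by simp [hbl.symm]), Finset.card_singleton]
      · rcases Finset.mem_union.mp hbY with h | h
        · exact Or.inl (by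
            intro t ht
            rcases Finset.mem_insert.mp ht with h' | h'
            · exact h' ▸ hlY₁
            · exact (Finset.mem_singleton.mp h') ▸ h)
        · exact Or.inr (by
            intro t ht
            rcases Finset.mem_insert.mp ht with h' | h'
            · exact h' ▸ hlY₂
            · exact (Finset.mem_singleton.mp h') ▸ h)
      · have : x ∩ ({l, b} : Finset (Fin n)) = {l} := by
          ext t
          simp only [hx, Finset.mem_inter, Finset.mem_insert, Finset.mem_singleton]
          constructor
          · rintro ⟨h1 | h1, h2 | h2⟩ <;> simp_all
          · rintro rfl; exact ⟨Or.inr rfl, Or.inl rfl⟩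
        rw [this, Finset.card_singleton]
  -- now count S
  have hjlsub1 : ({j, l} : Finset (Fin n)) ⊆ Y₁ := hxsub
  have hjlsub : ({j, l} : Finset (Fin n)) ⊆ Y₁ ∪ Y₂ :=
    hjlsub1.trans Finset.subset_union_left
  have hc_jl : ({j, l} : Finset (Fin n)).card = 2 := hxcard
  have hcard1 : (Y₁ \ {j, l}).card = m - 2 := by
    rw [Finset.card_sdiff_of_subset hjlsub1, hc_jl, hc1]
  have hunion : (Y₁ ∪ Y₂).card + (Y₁ ∩ Y₂).card = 2 * m := by
    rw [Finset.card_union_add_card_inter, hc1, hc2]; ring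
  have hcard2 : ((Y₁ ∪ Y₂) \ {j, l}).card = (Y₁ ∪ Y₂).card - 2 := by
    rw [Finset.card_sdiff_of_subset hjlsub, hc_jl]
  have hinj1 : ((Y₁ \ {j, l}).image fun a => ({j, a} : Finset (Fin n))).card
      = (Y₁ \ {j, l}).card := by
    apply Finset.card_image_of_injOn
    intro a ha a' ha' h
    have haj : a ≠ j := fun hh => (Finset.mem_sdiff.mp ha).2 (by simp [hh])
    simp only [] at h
    have : a ∈ ({j, a'} : Finset (Fin n)) := h ▸ (by simp : a ∈ ({j, a} : Finset (Fin n)))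
    rcases Finset.mem_insert.mp this with h' | h'
    · exact absurd h' haj
    · exact Finset.mem_singleton.mp h'
  have hinj2 : (((Y₁ ∪ Y₂) \ {j, l}).image fun b => ({l, b} : Finset (Fin n))).card
      = ((Y₁ ∪ Y₂) \ {j, l}).card := by
    apply Finset.card_image_of_injOn
    intro a ha a' ha' h
    have hal : a ≠ l := fun hh => (Finset.mem_sdiff.mp ha).2 (by simp [hh])
    simp only [] at h
    have : a ∈ ({l, a'} : Finset (Fin n)) := h ▸ (by simp : a ∈ ({l, a} : Finset (Fin n)))
    rcases Finset.mem_insert.mp this with h' | h'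
    · exact absurd h' hal
    · exact Finset.mem_singleton.mp h'
  have hdisj : Disjoint ((Y₁ \ {j, l}).image fun a => ({j, a} : Finset (Fin n)))
      (((Y₁ ∪ Y₂) \ {j, l}).image fun b => ({l, b} : Finset (Fin n))) := by
    rw [Finset.disjoint_left]
    intro y hy1 hy2
    obtain ⟨a, ha, rfl⟩ := Finset.mem_image.mp hy1
    obtain ⟨b, hb, hEq⟩ := Finset.mem_image.mp hy2
    have hal : a ≠ l := fun hh => (Finset.mem_sdiff.mp ha).2 (by simp [hh])
    have : l ∈ ({j, a} : Finset (Fin n)) := hEq ▸ (by simp)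
    rcases Finset.mem_insert.mp this with h' | h'
    · exact hjl h'.symm
    · exact hal (Finset.mem_singleton.mp h').symm
  have hScard : S.card = (m - 2) + ((Y₁ ∪ Y₂).card - 2) := by
    rw [hS, Finset.card_union_of_disjoint hdisj, hinj1, hinj2, hcard1, hcard2]
  have hle : S.card ≤ (C'.filter (fun y => (x ∩ y).card = 1)).card :=
    Finset.card_le_card hSsub
  omega
end
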